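/- arXiv:2509.18134 — 4 statements merged into one kernel-verified Lean document; each statement's English description precedes it below -/
import Mathlib

section
/- Let $\{A_k\}$ be a sequence of $n\times n$ row-stochastic matrices compatible with a fixed strongly connected directed graph, with minimum positive entries bounded below by $a > 0$ (in particular positive diagonal). Then there exists a sequence of stochastic vectors $\{\phi_k\}$ such that $\phi_{k+1}^T A_k = \phi_k^T$ for all $k \ge 1$, and each entry satisfies $[\phi_k]_i \ge a^n/n$. -/
open Matrix Finset Filter

namespace Stmt6

variable {n : ℕ}

/-- backward product `A (m-1) * A (m-2) * ... * A k` (identity if `m ≤ k`). -/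
noncomputable def bprod (A : ℕ → Matrix (Fin n) (Fin n) ℝ) (k m : ℕ) :
    Matrix (Fin n) (Fin n) ℝ :=
  ((List.range (m - k)).map (fun i => A (m - 1 - i))).prod

lemma bprod_self (A : ℕ → Matrix (Fin n) (Fin n) ℝ) {k m : ℕ} (h : m ≤ k) :
    bprod A k m = 1 := by
  unfold bprod
  rw [Nat.sub_eq_zero_of_le h]
  simp

lemma bprod_succ (A : ℕ → Matrix (Fin n) (Fin n) ℝ) {k m : ℕ} (h : k < m) :
    bprod A k m = bprod A (k + 1) m * A k := by
  unfold bprod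
  have h1 : m - k = (m - (k + 1)) + 1 := by omega
  rw [h1, List.range_succ, List.map_append, List.prod_append]
  have h2 : m - 1 - (m - (k + 1)) = k := by omega
  simp [h2]

lemma bprod_one (A : ℕ → Matrix (Fin n) (Fin n) ℝ) (k : ℕ) :
    bprod A k (k + 1) = A k := by
  rw [bprod_succ A (Nat.lt_succ_self k), bprod_self A le_rfl, one_mul]

lemma bprod_split (A : ℕ → Matrix (Fin n) (Fin n) ℝ) {l m : ℕ} (hlm : l ≤ m) :
    ∀ d k, k ≤ l → l - k = d → bprod A k m = bprod A l m * bprod A k l := by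
  intro d
  induction d with
  | zero =>
    intro k hkl hd
    have : k = l := by omega
    subst this
    rw [bprod_self A le_rfl, mul_one]
  | succ d ih =>
    intro k hkl hd
    have hk : k < l := by omega
    rw [bprod_succ A (lt_of_lt_of_le hk hlm), ih (k+1) (by omega) (by omega),
        mul_assoc, ← bprod_succ A hk]

/-- "row stochastic" predicate. -/
def RS (M : Matrix (Fin n) (Fin n) ℝ) : Prop :=
  (∀ i j, 0 ≤ M i j) ∧ (∀ i, ∑ j, M i j = 1)

lemma RS_one : RS (1 : Matrix (Fin n) (Fin n) ℝ) := by
  constructor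
  · intro i j
    by_cases h : i = j <;> simp [Matrix.one_apply, h]
  · intro i
    simp [Matrix.one_apply]

lemma RS_mul {M N : Matrix (Fin n) (Fin n) ℝ} (hM : RS M) (hN : RS N) : RS (M * N) := by
  constructor
  · intro i j
    rw [Matrix.mul_apply]
    exact Finset.sum_nonneg fun l _ => mul_nonneg (hM.1 i l) (hN.1 l j)
  · intro i
    simp only [Matrix.mul_apply]
    rw [Finset.sum_comm]
    calc ∑ l, ∑ j, M i l * N l j = ∑ l, M i l * ∑ j, N l j := by
          simp [Finset.mul_sum]
      _ = ∑ l, M i l := by simp [hN.2]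
      _ = 1 := hM.2 i

lemma RS_prod : ∀ L : List (Matrix (Fin n) (Fin n) ℝ), (∀ M ∈ L, RS M) → RS L.prod := by
  intro L
  induction L with
  | nil => intro _; simpa using RS_one
  | cons M L ih =>
    intro h
    rw [List.prod_cons]
    exact RS_mul (h M (by simp)) (ih fun N hN => h N (by simp [hN]))

/-- boundary crossing lemma -/
lemma boundary {α : Type*} {r : α → α → Prop} {S : Finset α} :
    ∀ {x y : α}, Relation.TransGen r x y → x ∈ S → y ∉ S →
      ∃ u ∈ S, ∃ v, v ∉ S ∧ r u v := by
  intro x y h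
  induction h with
  | single h => intro hx hy; exact ⟨_, hx, _, hy, h⟩
  | @tail b c h1 h2 ih =>
    intro hx hy
    by_cases hb : b ∈ S
    · exact ⟨b, hb, c, hy, h2⟩
    · exact ih hx hb

end Stmt6

open Stmt6

/-- Lemma 1 (absolute probability sequence for row-stochastic matrices):
there exist stochastic vectors `φ k` with `φ (k+1)ᵀ A k = φ kᵀ` and
entries bounded below by `aⁿ/n`. -/
theorem stmt_6 (n : ℕ) (hn : 0 < n) (adj : Fin n → Fin n → Prop)
    (hconn : ∀ i j : Fin n, i ≠ j → Relation.TransGen adj i j)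
    (a : ℝ) (ha : 0 < a) (A : ℕ → Matrix (Fin n) (Fin n) ℝ)
    (hrow : ∀ k i, ∑ j, A k i j = 1)
    (hpos : ∀ k i j, (adj j i ∨ j = i) → a ≤ A k i j)
    (hzero : ∀ k i j, ¬(adj j i ∨ j = i) → A k i j = 0) :
    ∃ φ : ℕ → (Fin n → ℝ),
      ∀ k, 1 ≤ k →
        (∀ i, 0 ≤ φ k i) ∧ (∑ i, φ k i = 1) ∧
        (Matrix.vecMul (φ (k + 1)) (A k) = φ k) ∧
        (∀ i, a ^ n / n ≤ φ k i) := by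
  -- each A k is row stochastic
  have hRSA : ∀ k, RS (A k) := by
    intro k
    constructor
    · intro i j
      by_cases h : adj j i ∨ j = i
      · exact le_of_lt (lt_of_lt_of_le ha (hpos k i j h))
      · rw [hzero k i j h]
    · exact hrow k
  have hRSb : ∀ k m, RS (bprod A k m) := by
    intro k m
    apply RS_prod
    intro M hM
    simp only [List.mem_map] at hM
    obtain ⟨i, _, rfl⟩ := hM
    exact hRSA _
  -- key positivity: entries of n-step products are ≥ a^n
  have hkey : ∀ k i j, a ^ n ≤ bprod A k (k + n) i j := by
    intro k
    have step : ∀ t i l j, (adj l i ∨ l = i) → a ^ t ≤ bprod A k (k + t) l j →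
        a ^ (t + 1) ≤ bprod A k (k + t + 1) i j := by
      intro t i l j hadj hlj
      have h1 : bprod A k (k + t + 1) = A (k + t) * bprod A k (k + t) := by
        have := bprod_split A (l := k + t) (m := k + t + 1) (by omega) t k (by omega) (by omega)
        rw [this, bprod_one]
      rw [h1, Matrix.mul_apply]
      calc a ^ (t + 1) = a * a ^ t := by ring
        _ ≤ A (k + t) i l * bprod A k (k + t) l j :=
            mul_le_mul (hpos _ _ _ hadj) hlj (le_of_lt (pow_pos ha t))
              ((hRSA _).1 i l)
        _ ≤ ∑ p, A (k + t) i p * bprod A k (k + t) p j := by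
            apply Finset.single_le_sum (f := fun p => A (k + t) i p * bprod A k (k + t) p j)
              (fun p _ => mul_nonneg ((hRSA _).1 i p) ((hRSb _ _).1 p j)) (Finset.mem_univ l)
    intro i j
    -- the growing set
    set S : ℕ → Finset (Fin n) :=
      fun t => Finset.univ.filter (fun i => a ^ t ≤ bprod A k (k + t) i j) with hS
    have hmono : ∀ t, S t ⊆ S (t + 1) := by
      intro t i hi
      simp only [hS, Finset.mem_filter, Finset.mem_univ, true_and] at hi ⊢
      exact step t i i j (Or.inr rfl) hi
    have hbase : j ∈ S 1 := by
      simp only [hS, Finset.mem_filter, Finset.mem_univ, true_and]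
      have : bprod A k (k + 1) = A k := bprod_one A k
      rw [this, pow_one]
      exact hpos k j j (Or.inr rfl)
    have hgrow : ∀ t, (S t).Nonempty → S t ≠ Finset.univ → S t ⊂ S (t + 1) := by
      intro t hne hne2
      obtain ⟨u, hu⟩ := hne
      have : ∃ v, v ∉ S t := by
        by_contra h
        push_neg at h
        exact hne2 (Finset.eq_univ_of_forall h)
      obtain ⟨v, hv⟩ := this
      have huv : u ≠ v := fun h => hv (h ▸ hu)
      obtain ⟨p, hp, q, hq, hpq⟩ := boundary (hconn u v huv) hu hv
      rw [Finset.ssubset_iff_of_subset (hmono t)]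
      refine ⟨q, ?_, hq⟩
      have hp' : a ^ t ≤ bprod A k (k + t) p j := by
        simpa only [hS, Finset.mem_filter, Finset.mem_univ, true_and] using hp
      simp only [hS, Finset.mem_filter, Finset.mem_univ, true_and]
      exact step t q p j (Or.inl hpq) hp'
    -- cardinality induction
    have hcard : ∀ t, 1 ≤ t → S t = Finset.univ ∨ t ≤ (S t).card := by
      intro t ht
      induction t with
      | zero => omega
      | succ t ih =>
        rcases Nat.eq_or_lt_of_le ht with h1 | h1
        · right
          rw [← h1]
          have : (S 1).Nonempty := ⟨j, hbase⟩
          simpa [Finset.card_pos] using Finset.card_pos.mpr (h1 ▸ this)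
        · have ht' : 1 ≤ t := by omega
          rcases ih ht' with h | h
          · left
            exact Finset.univ_subset_iff.mp (h ▸ hmono t)
          · by_cases hu : S t = Finset.univ
            · left
              exact Finset.univ_subset_iff.mp (hu ▸ hmono t)
            · right
              have hne : (S t).Nonempty := Finset.card_pos.mp (by omega)
              have := Finset.card_lt_card (hgrow t hne hu)
              omega
    have hSn : S n = Finset.univ := by
      rcases hcard n hn with h | h
      · exact h
      · apply Finset.eq_univ_of_card
        have : (S n).card ≤ Fintype.card (Fin n) := Finset.card_le_univ _
        simp only [Fintype.card_fin] at this ⊢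
        omega
    have : i ∈ S n := hSn ▸ Finset.mem_univ i
    simpa only [hS, Finset.mem_filter, Finset.mem_univ, true_and] using this
  -- the approximating vectors
  set w : ℕ → ℕ → Fin n → ℝ :=
    fun m k => Matrix.vecMul (fun _ => (n : ℝ)⁻¹) (bprod A k m) with hw
  have hnR : (0:ℝ) < n := by exact_mod_cast hn
  have hwapp : ∀ m k j, w m k j = ∑ i, (n : ℝ)⁻¹ * bprod A k m i j := by
    intro m k j
    simp [hw, Matrix.vecMul, dotProduct]
  have hwnn : ∀ m k j, 0 ≤ w m k j := by
    intro m k j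
    rw [hwapp]
    exact Finset.sum_nonneg fun i _ =>
      mul_nonneg (by positivity) ((hRSb k m).1 i j)
  have hwsum : ∀ m k, ∑ j, w m k j = 1 := by
    intro m k
    simp only [hwapp]
    rw [Finset.sum_comm]
    have : ∀ i, ∑ j, (n : ℝ)⁻¹ * bprod A k m i j = (n : ℝ)⁻¹ := by
      intro i
      rw [← Finset.mul_sum, (hRSb k m).2 i, mul_one]
    rw [Finset.sum_congr rfl fun i _ => this i]
    simp [Finset.card_univ]
    field_simp
  have hwrec : ∀ m k, k < m → w m k = Matrix.vecMul (w m (k + 1)) (A k) := by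
    intro m k hkm
    simp only [hw]
    rw [bprod_succ A hkm, ← Matrix.vecMul_vecMul]
  have hwlb : ∀ m k j, k + n ≤ m → a ^ n ≤ w m k j := by
    intro m k j hm
    have hsplit : bprod A k m = bprod A (k + n) m * bprod A k (k + n) :=
      bprod_split A (l := k + n) hm n k (by omega) (by omega)
    have : w m k = Matrix.vecMul (w m (k + n)) (bprod A k (k + n)) := by
      simp only [hw]
      rw [hsplit, ← Matrix.vecMul_vecMul]
    rw [this]
    have hentry : Matrix.vecMul (w m (k + n)) (bprod A k (k + n)) j
        = ∑ i, w m (k + n) i * bprod A k (k + n) i j := by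
      simp [Matrix.vecMul, dotProduct]
    rw [hentry]
    calc a ^ n = ∑ i, w m (k + n) i * a ^ n := by
          rw [← Finset.sum_mul, hwsum, one_mul]
      _ ≤ ∑ i, w m (k + n) i * bprod A k (k + n) i j :=
          Finset.sum_le_sum fun i _ =>
            mul_le_mul_of_nonneg_left (hkey k i j) (hwnn m (k + n) i)
  -- compactness: extract a convergent subsequence
  set C : Set (ℕ → Fin n → ℝ) := Set.pi Set.univ (fun _ => stdSimplex ℝ (Fin n)) with hC
  have hCcomp : IsCompact C := isCompact_univ_pi fun _ => isCompact_stdSimplex _ _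
  have hmem : ∀ m, (fun k => w m k) ∈ C := by
    intro m
    rw [hC, Set.mem_univ_pi]
    intro k
    exact ⟨hwnn m k, hwsum m k⟩
  obtain ⟨φ, hφC, ψ, hψmono, hψlim⟩ := hCcomp.tendsto_subseq hmem
  have hφk : ∀ k, Tendsto (fun m => w (ψ m) k) atTop (nhds (φ k)) := by
    intro k
    have := tendsto_pi_nhds.mp hψlim k
    exact this
  have hφkj : ∀ k j, Tendsto (fun m => w (ψ m) k j) atTop (nhds (φ k j)) := by
    intro k j
    exact tendsto_pi_nhds.mp (hφk k) j
  have hφsimplex : ∀ k, (∀ i, 0 ≤ φ k i) ∧ ∑ i, φ k i = 1 := by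
    intro k
    have := Set.mem_univ_pi.mp hφC k
    exact this
  have hψge : ∀ m, m ≤ ψ m := fun m => (hψmono.le_apply)
  -- the recurrence in the limit
  have hrec : ∀ k, Matrix.vecMul (φ (k + 1)) (A k) = φ k := by
    intro k
    funext j
    have h1 : Tendsto (fun m => ∑ i, w (ψ m) (k + 1) i * A k i j) atTop
        (nhds (∑ i, φ (k + 1) i * A k i j)) := by
      apply tendsto_finset_sum
      intro i _
      exact (hφkj (k + 1) i).mul_const _
    have h2 : ∀ᶠ m in atTop, (∑ i, w (ψ m) (k + 1) i * A k i j) = w (ψ m) k j := by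
      filter_upwards [eventually_ge_atTop (k + 1)] with m hm
      have hk : k < ψ m := lt_of_lt_of_le (by omega) (hψge m)
      rw [hwrec (ψ m) k hk]
      simp [Matrix.vecMul, dotProduct]
    have h3 : Tendsto (fun m => ∑ i, w (ψ m) (k + 1) i * A k i j) atTop
        (nhds (φ k j)) := (hφkj k j).congr' (h2.mono fun m hm => hm.symm)
    have := tendsto_nhds_unique h1 h3
    simpa [Matrix.vecMul, dotProduct] using this
  -- lower bound in the limit
  have hlb : ∀ k j, a ^ n ≤ φ k j := by
    intro k j
    apply ge_of_tendsto (hφkj k j)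
    filter_upwards [eventually_ge_atTop (k + n)] with m hm
    exact hwlb (ψ m) k j (le_trans hm (hψge m))
  refine ⟨φ, fun k _ => ⟨(hφsimplex k).1, (hφsimplex k).2, hrec k, fun i => ?_⟩⟩
  calc a ^ n / n ≤ a ^ n := by
        apply div_le_self (le_of_lt (pow_pos ha n))
        exact_mod_cast hn
    _ ≤ φ k i := hlb k i
end

section
/- Let $\{B_k\}$ be a sequence of $n\times n$ column-stochastic matrices compatible with a fixed strongly connected directed graph, with minimum positive entries bounded below by $b > 0$. Define $\pi_1 = \frac{1}{n}\mathbf{1}$ and $\pi_{k+1} = B_k \pi_k$. Then each $\pi_k$ is a stochastic vector and $[\pi_k]_i \ge b^n/n$ for all $k \ge 1$ and $i \in [n]$. -/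
open Finset

open Classical in
noncomputable def nextSet {n : ℕ} (adj : Fin n → Fin n → Prop) (s : Finset (Fin n)) :
    Finset (Fin n) :=
  s ∪ Finset.univ.filter (fun l => ∃ i ∈ s, adj i l)

lemma subset_nextSet {n : ℕ} (adj : Fin n → Fin n → Prop) (s : Finset (Fin n)) :
    s ⊆ nextSet adj s := Finset.subset_union_left

lemma nextSet_mono {n : ℕ} (adj : Fin n → Fin n → Prop) {s t : Finset (Fin n)} (h : s ⊆ t) :
    nextSet adj s ⊆ nextSet adj t := by
  classical
  unfold nextSet
  apply Finset.union_subset_union h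
  intro l hl
  simp only [Finset.mem_filter, Finset.mem_univ, true_and] at hl ⊢
  obtain ⟨i, hi, ha⟩ := hl
  exact ⟨i, h hi, ha⟩

lemma iter_mono {n : ℕ} (adj : Fin n → Fin n → Prop) (s : Finset (Fin n)) :
    ∀ {m m' : ℕ}, m ≤ m' → (nextSet adj)^[m] s ⊆ (nextSet adj)^[m'] s := by
  intro m m' h
  induction h with
  | refl => exact Finset.Subset.refl _
  | step h' ih =>
      rw [Function.iterate_succ_apply']
      exact ih.trans (subset_nextSet adj _)

lemma mem_of_transGen {n : ℕ} (adj : Fin n → Fin n → Prop) {j i : Fin n}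
    (h : Relation.TransGen adj j i) : ∃ m, i ∈ (nextSet adj)^[m] {j} := by
  classical
  induction h with
  | single ha =>
      exact ⟨1, by
        simp only [Function.iterate_one, nextSet, Finset.mem_union, Finset.mem_filter,
          Finset.mem_univ, true_and]
        exact Or.inr ⟨j, Finset.mem_singleton_self j, ha⟩⟩
  | tail _ ha ih =>
      obtain ⟨m, hm⟩ := ih
      refine ⟨m + 1, ?_⟩
      rw [Function.iterate_succ_apply']
      simp only [nextSet, Finset.mem_union, Finset.mem_filter, Finset.mem_univ, true_and]
      exact Or.inr ⟨_, hm, ha⟩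

lemma iter_stab {n : ℕ} (hn : 0 < n) (adj : Fin n → Fin n → Prop) (j : Fin n) :
    ∀ m, (nextSet adj)^[m] {j} ⊆ (nextSet adj)^[n-1] {j} := by
  classical
  -- find a fixpoint index k < n
  have hfix : ∃ k < n, (nextSet adj)^[k+1] {j} = (nextSet adj)^[k] {j} := by
    by_contra hcon
    push_neg at hcon
    have hcard : ∀ k ≤ n, k + 1 ≤ ((nextSet adj)^[k] {j}).card := by
      intro k hk
      induction k with
      | zero => simp
      | succ k ih =>
          have h1 := ih (Nat.le_of_succ_le hk)
          have hne := hcon k (Nat.lt_of_succ_le hk)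
          have hss : (nextSet adj)^[k] {j} ⊂ (nextSet adj)^[k+1] {j} := by
            refine ⟨iter_mono adj _ (Nat.le_succ k), ?_⟩
            intro hsub
            exact hne (Finset.Subset.antisymm hsub (iter_mono adj _ (Nat.le_succ k)))
          have := Finset.card_lt_card hss
          omega
    have h1 := hcard n le_rfl
    have h2 : ((nextSet adj)^[n] {j}).card ≤ n := by
      simpa using Finset.card_le_card (Finset.subset_univ ((nextSet adj)^[n] {j}))
    omega
  obtain ⟨k, hk, hfixk⟩ := hfix
  have hstable : ∀ d, (nextSet adj)^[k+d] {j} = (nextSet adj)^[k] {j} := by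
    intro d
    induction d with
    | zero => rfl
    | succ d ih =>
        have h3 : (nextSet adj)^[k+(d+1)] {j} = nextSet adj ((nextSet adj)^[k+d] {j}) := by
          rw [show k+(d+1) = (k+d)+1 by ring, Function.iterate_succ_apply']
        rw [h3, ih]
        rw [← Function.iterate_succ_apply' (nextSet adj) k {j}]
        exact hfixk
  intro m
  rcases le_or_gt m (n-1) with hm | hm
  · exact iter_mono adj _ hm
  · have hkm : k ≤ m := by omega
    have : (nextSet adj)^[m] {j} = (nextSet adj)^[k] {j} := by
      have := hstable (m - k)
      rwa [Nat.add_sub_cancel' hkm] at this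
    rw [this]
    exact iter_mono adj _ (by omega)

/-- Lemma 2: with column-stochastic `B k` compatible with a strongly connected digraph
(minimum positive entries ≥ b), the sequence `π 1 = (1/n)𝟏`, `π (k+1) = B k π k`
consists of stochastic vectors with entries bounded below by `bⁿ/n`. -/
theorem stmt_7 (n : ℕ) (hn : 0 < n) (adj : Fin n → Fin n → Prop)
    (hconn : ∀ i j : Fin n, i ≠ j → Relation.TransGen adj i j)
    (b : ℝ) (hb : 0 < b) (B : ℕ → Matrix (Fin n) (Fin n) ℝ)
    (hcol : ∀ k i, ∑ l, B k l i = 1)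
    (hpos : ∀ k l i, (adj i l ∨ l = i) → b ≤ B k l i)
    (hzero : ∀ k l i, ¬(adj i l ∨ l = i) → B k l i = 0)
    (π : ℕ → (Fin n → ℝ))
    (hinit : π 1 = fun _ => 1 / (n : ℝ))
    (hrec : ∀ k, 1 ≤ k → π (k + 1) = Matrix.mulVec (B k) (π k)) :
    ∀ k, 1 ≤ k →
      (∀ i, 0 ≤ π k i) ∧ (∑ i, π k i = 1) ∧ (∀ i, b ^ n / n ≤ π k i) := by
  classical
  have hnR : (0 : ℝ) < n := by exact_mod_cast hn
  -- entries of B are nonnegative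
  have hBnn : ∀ k l i, 0 ≤ B k l i := by
    intro k l i
    by_cases h : adj i l ∨ l = i
    · exact le_trans hb.le (hpos k l i h)
    · rw [hzero k l i h]
  -- b ≤ 1
  have hb1 : b ≤ 1 := by
    obtain ⟨i⟩ : Nonempty (Fin n) := ⟨⟨0, hn⟩⟩
    have h1 : B 0 i i ≤ ∑ l, B 0 l i :=
      Finset.single_le_sum (fun l _ => hBnn 0 l i) (Finset.mem_univ i)
    have h2 := hpos 0 i i (Or.inr rfl)
    rw [hcol 0 i] at h1
    linarith
  -- nonnegativity of π
  have hnn : ∀ k, 1 ≤ k → ∀ i, 0 ≤ π k i := by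
    intro k hk
    induction k, hk using Nat.le_induction with
    | base => intro i; rw [hinit]; positivity
    | succ k hk ih =>
        intro i
        rw [hrec k hk]
        simp only [Matrix.mulVec, dotProduct]
        exact Finset.sum_nonneg fun j _ => mul_nonneg (hBnn k i j) (ih j)
  -- sum of π is 1
  have hsum : ∀ k, 1 ≤ k → ∑ i, π k i = 1 := by
    intro k hk
    induction k, hk using Nat.le_induction with
    | base =>
        rw [hinit]
        rw [Finset.sum_const, Finset.card_univ, Fintype.card_fin, nsmul_eq_mul]
        field_simp
    | succ k hk ih =>
        rw [hrec k hk]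
        simp only [Matrix.mulVec, dotProduct]
        rw [Finset.sum_comm]
        calc ∑ j, ∑ i, B k i j * π k j = ∑ j, (∑ i, B k i j) * π k j := by
              simp [Finset.sum_mul]
          _ = ∑ j, π k j := by
              refine Finset.sum_congr rfl fun j _ => ?_
              rw [hcol k j, one_mul]
          _ = 1 := ih
  -- key propagation lemma
  have keyA : ∀ t, 1 ≤ t → ∀ m (j i : Fin n), i ∈ (nextSet adj)^[m] {j} →
      b ^ m * π t j ≤ π (t + m) i := by
    intro t ht m
    induction m with
    | zero =>
        intro j i hi
        simp only [Function.iterate_zero, id_eq, Finset.mem_singleton] at hi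
        subst hi
        simp
    | succ m ih =>
        intro j i hi
        rw [Function.iterate_succ_apply'] at hi
        have htm : 1 ≤ t + m := by omega
        have hrw : π (t + (m+1)) = Matrix.mulVec (B (t+m)) (π (t+m)) := by
          rw [show t + (m+1) = (t+m) + 1 by ring]
          exact hrec (t+m) htm
        have hterm : ∀ (l : Fin n), l ∈ (nextSet adj)^[m] {j} → (adj l i ∨ i = l ∨ i ∈ (nextSet adj)^[m] {j}) → True := fun _ _ _ => trivial
        simp only [nextSet, Finset.mem_union, Finset.mem_filter, Finset.mem_univ,
          true_and] at hi
        have hbound : ∀ l : Fin n, b ≤ B (t+m) i l → b ^ m * π t j ≤ π (t+m) l →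
            b ^ (m+1) * π t j ≤ π (t + (m+1)) i := by
          intro l hBl hl
          rw [hrw]
          simp only [Matrix.mulVec, dotProduct]
          have h1 : B (t+m) i l * π (t+m) l ≤ ∑ x, B (t+m) i x * π (t+m) x :=
            Finset.single_le_sum
              (fun x _ => mul_nonneg (hBnn _ i x) (hnn (t+m) htm x)) (Finset.mem_univ l)
          have h2 : b * (b ^ m * π t j) ≤ B (t+m) i l * π (t+m) l := by
            have hπl := hnn (t+m) htm l
            have hπj := hnn t ht j
            have hbm : (0:ℝ) ≤ b ^ m * π t j := mul_nonneg (by positivity) hπj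
            calc b * (b ^ m * π t j) ≤ b * π (t+m) l := by
                  exact mul_le_mul_of_nonneg_left (le_trans hl (le_refl _)) hb.le
              _ ≤ B (t+m) i l * π (t+m) l := mul_le_mul_of_nonneg_right hBl hπl
          calc b ^ (m+1) * π t j = b * (b ^ m * π t j) := by ring
            _ ≤ B (t+m) i l * π (t+m) l := h2
            _ ≤ _ := h1
        rcases hi with hi | ⟨l, hl, hadj⟩
        · exact hbound i (hpos _ i i (Or.inr rfl)) (ih j i hi)
        · exact hbound l (hpos _ i l (Or.inl hadj)) (ih j l hl)
  -- reachability within n-1 steps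
  have reach : ∀ j i : Fin n, i ∈ (nextSet adj)^[n-1] {j} := by
    intro j i
    by_cases hij : i = j
    · subst hij
      exact iter_mono adj {i} (Nat.zero_le _) (Finset.mem_singleton_self i)
    · obtain ⟨m, hm⟩ := mem_of_transGen adj (hconn j i (fun h => hij h.symm))
      exact iter_stab hn adj j m hm
  -- main conclusion
  intro k hk
  refine ⟨hnn k hk, hsum k hk, ?_⟩
  intro i
  rcases le_or_gt k n with hkn | hkn
  · -- small k : use diagonal propagation from time 1
    have hmem : i ∈ (nextSet adj)^[k-1] {i} :=
      iter_mono adj {i} (Nat.zero_le _) (Finset.mem_singleton_self i)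
    have h1 := keyA 1 le_rfl (k-1) i i hmem
    rw [show 1 + (k-1) = k by omega] at h1
    rw [hinit] at h1
    have h2 : b ^ n ≤ b ^ (k-1) := pow_le_pow_of_le_one hb.le hb1 (by omega)
    have : b ^ n / n ≤ b ^ (k-1) * (1 / n) := by
      rw [div_eq_mul_one_div]
      exact mul_le_mul_of_nonneg_right h2 (by positivity)
    exact le_trans this h1
  · -- large k : use mass concentration + strong connectivity
    set t := k - (n-1) with htdef
    have ht1 : 1 ≤ t := by omega
    have htk : t + (n-1) = k := by omega
    obtain ⟨j, hj⟩ : ∃ j, 1 / (n:ℝ) ≤ π t j := by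
      by_contra hcon
      push_neg at hcon
      have hlt : ∑ x, π t x < ∑ _x : Fin n, 1 / (n:ℝ) :=
        Finset.sum_lt_sum_of_nonempty ⟨⟨0, hn⟩, Finset.mem_univ _⟩
          (fun x _ => hcon x)
      rw [hsum t ht1] at hlt
      rw [Finset.sum_const, Finset.card_univ, Fintype.card_fin, nsmul_eq_mul] at hlt
      rw [mul_one_div, div_self (ne_of_gt hnR)] at hlt
      exact lt_irrefl 1 hlt
    have h1 := keyA t ht1 (n-1) j i (reach j i)
    rw [htk] at h1
    have h2 : b ^ n ≤ b ^ (n-1) := pow_le_pow_of_le_one hb.le hb1 (by omega)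
    have h3 : b ^ n / n ≤ b ^ (n-1) * π t j := by
      calc b ^ n / n ≤ b ^ (n-1) * (1/n) := by
            rw [div_eq_mul_one_div]
            exact mul_le_mul_of_nonneg_right h2 (by positivity)
        _ ≤ b ^ (n-1) * π t j := mul_le_mul_of_nonneg_left hj (by positivity)
    exact le_trans h3 h1
end

section
/- Let $M \in \mathbb{R}^{3\times 3}$ be a nonnegative irreducible matrix with $M_{ii} < c^*$ for some $c^* > 0$ and all $i$. Then the spectral radius $\rho(M) < c^*$ if and only if $\det(c^* I - M) > 0$. -/
set_option maxHeartbeats 1600000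

lemma ineqA (a b c d e f g h k : ℝ) (ha : 0 ≤ a) (hb : 0 ≤ b) (hc : 0 ≤ c)
    (hd : 0 ≤ d) (he : 0 ≤ e) (hf : 0 ≤ f) (hg : 0 ≤ g) (hh : 0 ≤ h) (hk : 0 ≤ k)
    (h1 : a ≤ b + c) (h2 : e ≤ d + f) (h3 : k ≤ g + h) :
    a*e*k ≤ a*f*h + c*e*g + b*d*k + b*f*g + c*d*h := by
  rcases le_or_gt (a*e) (b*d) with hs | hs
  · nlinarith [mul_nonneg (mul_nonneg ha hf) hh, mul_nonneg (mul_nonneg hc he) hg,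
      mul_nonneg (mul_nonneg hb hf) hg, mul_nonneg (mul_nonneg hc hd) hh,
      mul_le_mul_of_nonneg_right hs hk]
  · rcases le_or_gt (e*(g+h)) (f*h) with ht | ht
    · nlinarith [mul_le_mul_of_nonneg_left h3 (mul_nonneg ha he),
        mul_le_mul_of_nonneg_left ht ha,
        mul_nonneg (mul_nonneg hc he) hg, mul_nonneg (mul_nonneg hb hd) hk,
        mul_nonneg (mul_nonneg hb hf) hg, mul_nonneg (mul_nonneg hc hd) hh]
    · nlinarith [mul_nonneg (sub_nonneg.2 h1) (sub_nonneg.2 ht.le),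
        mul_nonneg (sub_nonneg.2 h2) (by nlinarith : (0:ℝ) ≤ b*g + b*h + c*h),
        mul_nonneg (sub_nonneg.2 h3) (sub_nonneg.2 hs.le)]

lemma ineqB (a b c d e f g h k : ℝ) (hb : 0 ≤ b) (hc : 0 ≤ c)
    (hd : 0 ≤ d) (hf : 0 ≤ f) (hg : 0 ≤ g) (hh : 0 ≤ h)
    (h1 : b + c < a) (h2 : d + f < e) (h3 : g + h < k) :
    a*f*h + c*e*g + b*d*k + b*f*g + c*d*h < a*e*k := by
  have ha : 0 < a := by linarith
  have he : 0 < e := by linarith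
  have hae : b*d < a*e := by nlinarith
  nlinarith [mul_pos (sub_pos.2 h3) (sub_pos.2 hae),
    mul_nonneg (sub_nonneg.2 h1.le) (by nlinarith : (0:ℝ) ≤ e*(g+h) - f*h),
    mul_nonneg (sub_nonneg.2 h2.le) (by nlinarith : (0:ℝ) ≤ b*g + b*h + c*h)]

lemma det_nonpos (A B C D E F G H K x0 x1 x2 : ℝ)
    (hA : 0 < A) (hE : 0 < E) (hK : 0 < K)
    (hB : 0 ≤ B) (hC : 0 ≤ C) (hD : 0 ≤ D) (hF : 0 ≤ F) (hG : 0 ≤ G) (hH : 0 ≤ H)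
    (hx0 : 0 ≤ x0) (hx1 : 0 ≤ x1) (hx2 : 0 ≤ x2)
    (hne : ¬ (x0 = 0 ∧ x1 = 0 ∧ x2 = 0))
    (r1 : A*x0 ≤ B*x1 + C*x2) (r2 : E*x1 ≤ D*x0 + F*x2) (r3 : K*x2 ≤ G*x0 + H*x1) :
    A*E*K - A*F*H - C*E*G - B*D*K - B*F*G - C*D*H ≤ 0 := by
  rcases hx0.eq_or_lt with h0 | h0 <;> rcases hx1.eq_or_lt with h1 | h1 <;>
    rcases hx2.eq_or_lt with h2 | h2
  · exact absurd ⟨h0.symm, h1.symm, h2.symm⟩ hne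
  · subst h0; subst h1; exact absurd r3 (by nlinarith)
  · subst h0; subst h2; exact absurd r2 (by nlinarith)
  · subst h0
    have h5 : (E*x1)*(K*x2) ≤ (F*x2)*(H*x1) := by
      nlinarith [mul_le_mul r2 r3 (by nlinarith : (0:ℝ) ≤ K*x2) (by nlinarith)]
    have h6 : E*K ≤ F*H := by nlinarith [h5, mul_pos h1 h2]
    nlinarith [mul_le_mul_of_nonneg_left h6 hA.le, mul_nonneg (mul_nonneg hC hE.le) hG,
      mul_nonneg (mul_nonneg hB hD) hK.le, mul_nonneg (mul_nonneg hB hF) hG,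
      mul_nonneg (mul_nonneg hC hD) hH]
  · subst h1; subst h2; exact absurd r1 (by nlinarith)
  · subst h1
    have h5 : (A*x0)*(K*x2) ≤ (C*x2)*(G*x0) := by
      nlinarith [mul_le_mul r1 r3 (by nlinarith : (0:ℝ) ≤ K*x2) (by nlinarith)]
    have h6 : A*K ≤ C*G := by nlinarith [h5, mul_pos h0 h2]
    nlinarith [mul_le_mul_of_nonneg_left h6 hE.le, mul_nonneg (mul_nonneg hA.le hF) hH,
      mul_nonneg (mul_nonneg hB hD) hK.le, mul_nonneg (mul_nonneg hB hF) hG,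
      mul_nonneg (mul_nonneg hC hD) hH]
  · subst h2
    have h5 : (A*x0)*(E*x1) ≤ (B*x1)*(D*x0) := by
      nlinarith [mul_le_mul r1 r2 (by nlinarith : (0:ℝ) ≤ E*x1) (by nlinarith)]
    have h6 : A*E ≤ B*D := by nlinarith [h5, mul_pos h0 h1]
    nlinarith [mul_le_mul_of_nonneg_left h6 hK.le, mul_nonneg (mul_nonneg hA.le hF) hH,
      mul_nonneg (mul_nonneg hC hE.le) hG, mul_nonneg (mul_nonneg hB hF) hG,
      mul_nonneg (mul_nonneg hC hD) hH]
  · have ia := ineqA (A*x0) (B*x1) (C*x2) (D*x0) (E*x1) (F*x2) (G*x0) (H*x1) (K*x2)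
      (by positivity) (by positivity) (by positivity) (by positivity) (by positivity)
      (by positivity) (by positivity) (by positivity) (by positivity) r1 r2 r3
    nlinarith [ia, mul_pos (mul_pos h0 h1) h2]

/-- Lemma 9: for a nonnegative irreducible `3×3` matrix `M` with diagonal entries
below `c* > 0`, the spectral radius satisfies `ρ(M) < c*` iff `det(c* I − M) > 0`. -/
theorem stmt_8 (M : Matrix (Fin 3) (Fin 3) ℝ)
    (hnonneg : ∀ i j, 0 ≤ M i j)
    (hirr : ∀ i j : Fin 3, Relation.TransGen (fun u v : Fin 3 => 0 < M u v) i j)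
    (c : ℝ) (hc : 0 < c) (hdiag : ∀ i, M i i < c) :
    (∀ μ ∈ spectrum ℂ (M.map (Complex.ofReal)), ‖μ‖ < c) ↔
      0 < Matrix.det (c • (1 : Matrix (Fin 3) (Fin 3) ℝ) - M) := by
  have hdetexpr : ∀ t : ℝ, Matrix.det (t • (1 : Matrix (Fin 3) (Fin 3) ℝ) - M) =
      (t - M 0 0)*(t - M 1 1)*(t - M 2 2) - (t - M 0 0)*(M 1 2)*(M 2 1)
        - (M 0 1)*(M 1 0)*(t - M 2 2) - (M 0 1)*(M 1 2)*(M 2 0)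
        - (M 0 2)*(M 1 0)*(M 2 1) - (M 0 2)*(t - M 1 1)*(M 2 0) := by
    intro t
    rw [Matrix.det_fin_three]
    have e1 : ((0:Fin 3) = 1) = False := by decide
    have e2 : ((0:Fin 3) = 2) = False := by decide
    have e3 : ((1:Fin 3) = 0) = False := by decide
    have e4 : ((1:Fin 3) = 2) = False := by decide
    have e5 : ((2:Fin 3) = 0) = False := by decide
    have e6 : ((2:Fin 3) = 1) = False := by decide
    simp only [Matrix.smul_apply, Matrix.sub_apply, Matrix.one_apply, e1, e2, e3, e4, e5, e6,
      if_true, if_false, ite_true, ite_false, smul_eq_mul, mul_one, mul_zero]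
    ring
  have hspec_det : ∀ s : ℝ, Matrix.det (s • (1 : Matrix (Fin 3) (Fin 3) ℝ) - M) = 0 →
      (s : ℂ) ∈ spectrum ℂ (M.map Complex.ofReal) := by
    intro s hs
    rw [spectrum.mem_iff]
    have hmap : algebraMap ℂ (Matrix (Fin 3) (Fin 3) ℂ) (s : ℂ) - M.map Complex.ofReal
        = (s • (1 : Matrix (Fin 3) (Fin 3) ℝ) - M).map Complex.ofRealHom := by
      ext i j
      simp [Matrix.sub_apply, Matrix.map_apply, Algebra.algebraMap_eq_smul_one,
        Matrix.smul_apply, Matrix.one_apply]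
      split_ifs <;> push_cast <;> ring
    rw [hmap, Matrix.isUnit_iff_isUnit_det, ← RingHom.mapMatrix_apply, ← RingHom.map_det, hs]
    simp
  constructor
  · -- forward: all eigenvalues inside disc ⇒ det positive
    intro hspec
    set T : ℝ := c + (M 0 0 + M 0 1 + M 0 2 + M 1 0 + M 1 1 + M 1 2 + M 2 0 + M 2 1 + M 2 2) + 1
      with hT
    have hn00 := hnonneg 0 0; have hn01 := hnonneg 0 1; have hn02 := hnonneg 0 2
    have hn10 := hnonneg 1 0; have hn11 := hnonneg 1 1; have hn12 := hnonneg 1 2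
    have hn20 := hnonneg 2 0; have hn21 := hnonneg 2 1; have hn22 := hnonneg 2 2
    have hcT : c ≤ T := by simp only [hT]; linarith
    have hgT : 0 < Matrix.det (T • (1 : Matrix (Fin 3) (Fin 3) ℝ) - M) := by
      rw [hdetexpr]
      have := ineqB (T - M 0 0) (M 0 1) (M 0 2) (M 1 0) (T - M 1 1) (M 1 2) (M 2 0) (M 2 1)
        (T - M 2 2) hn01 hn02 hn10 hn12 hn20 hn21 (by simp only [hT]; linarith)
        (by simp only [hT]; linarith) (by simp only [hT]; linarith)
      linarith
    -- no root in [c, T]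
    have hnoroot : ∀ s : ℝ, c ≤ s → Matrix.det (s • (1 : Matrix (Fin 3) (Fin 3) ℝ) - M) ≠ 0 := by
      intro s hcs hs
      have hmem := hspec_det s hs
      have := hspec _ hmem
      rw [Complex.norm_real, Real.norm_eq_abs] at this
      have : s < c := lt_of_abs_lt this
      linarith
    by_contra hnpos
    have hgc : Matrix.det (c • (1 : Matrix (Fin 3) (Fin 3) ℝ) - M) < 0 :=
      lt_of_le_of_ne (not_lt.1 hnpos) (hnoroot c le_rfl)
    -- IVT
    set g : ℝ → ℝ := fun t => (t - M 0 0)*(t - M 1 1)*(t - M 2 2) - (t - M 0 0)*(M 1 2)*(M 2 1)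
        - (M 0 1)*(M 1 0)*(t - M 2 2) - (M 0 1)*(M 1 2)*(M 2 0)
        - (M 0 2)*(M 1 0)*(M 2 1) - (M 0 2)*(t - M 1 1)*(M 2 0) with hg
    have hgcont : ContinuousOn g (Set.Icc c T) := by
      apply Continuous.continuousOn
      simp only [hg]
      fun_prop
    have h0mem : (0:ℝ) ∈ Set.Ioo (g c) (g T) := by
      constructor
      · rw [hg]; simpa [← hdetexpr c] using hgc
      · rw [hg]; simpa [← hdetexpr T] using hgT
    obtain ⟨s, hsIoo, hgs⟩ := intermediate_value_Ioo hcT hgcont h0mem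
    exact hnoroot s hsIoo.1.le (by rw [hdetexpr]; exact hgs)
  · -- backward
    intro hdet μ hμ
    by_contra hlt
    push_neg at hlt
    have hdet0 : (algebraMap ℂ (Matrix (Fin 3) (Fin 3) ℂ) μ - M.map Complex.ofReal).det = 0 := by
      by_contra h
      exact (spectrum.mem_iff.1 hμ)
        ((Matrix.isUnit_iff_isUnit_det _).2 (isUnit_iff_ne_zero.2 h))
    obtain ⟨v, hv0, hv⟩ := Matrix.exists_mulVec_eq_zero_iff.2 hdet0
    have heig : ∀ i, (M.map Complex.ofReal).mulVec v i = μ * v i := by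
      intro i
      have := congrFun hv i
      rw [Matrix.sub_mulVec] at this
      rw [Algebra.algebraMap_eq_smul_one, Matrix.smul_mulVec, Matrix.one_mulVec] at this
      have h2 : μ • v i - (M.map Complex.ofReal).mulVec v i = 0 := this
      have : μ * v i - (M.map Complex.ofReal).mulVec v i = 0 := by simpa [smul_eq_mul] using h2
      linear_combination -this
    set x : Fin 3 → ℝ := fun i => ‖v i‖ with hx
    have hxnn : ∀ i, 0 ≤ x i := fun i => norm_nonneg _
    have hrow : ∀ i, c * x i ≤ M i 0 * x 0 + M i 1 * x 1 + M i 2 * x 2 := by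
      intro i
      have hexp : (M.map Complex.ofReal).mulVec v i
          = (M i 0 : ℂ) * v 0 + (M i 1 : ℂ) * v 1 + (M i 2 : ℂ) * v 2 := by
        simp [Matrix.mulVec, dotProduct, Fin.sum_univ_three, Matrix.map_apply]
      have h1 : c * x i ≤ ‖μ‖ * ‖v i‖ :=
        mul_le_mul_of_nonneg_right hlt (norm_nonneg _)
      have h2 : ‖μ‖ * ‖v i‖ = ‖μ * v i‖ := (norm_mul _ _).symm
      have h3 : ‖μ * v i‖
          = ‖(M i 0 : ℂ) * v 0 + (M i 1 : ℂ) * v 1 + (M i 2 : ℂ) * v 2‖ := by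
        rw [← heig i, hexp]
      have h4 : ‖(M i 0 : ℂ) * v 0 + (M i 1 : ℂ) * v 1 + (M i 2 : ℂ) * v 2‖
          ≤ M i 0 * x 0 + M i 1 * x 1 + M i 2 * x 2 := by
        have t1 := norm_add_le ((M i 0 : ℂ) * v 0 + (M i 1 : ℂ) * v 1) ((M i 2 : ℂ) * v 2)
        have t2 := norm_add_le ((M i 0 : ℂ) * v 0) ((M i 1 : ℂ) * v 1)
        have e0 : ‖(M i 0 : ℂ) * v 0‖ = M i 0 * x 0 := by
          rw [norm_mul, Complex.norm_real, Real.norm_eq_abs, abs_of_nonneg (hnonneg i 0)]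
        have e1 : ‖(M i 1 : ℂ) * v 1‖ = M i 1 * x 1 := by
          rw [norm_mul, Complex.norm_real, Real.norm_eq_abs, abs_of_nonneg (hnonneg i 1)]
        have e2 : ‖(M i 2 : ℂ) * v 2‖ = M i 2 * x 2 := by
          rw [norm_mul, Complex.norm_real, Real.norm_eq_abs, abs_of_nonneg (hnonneg i 2)]
        rw [e2] at t1
        rw [e0, e1] at t2
        linarith [t1, t2]
      calc c * x i ≤ ‖μ‖ * ‖v i‖ := h1
        _ = ‖μ * v i‖ := h2
        _ = _ := h3
        _ ≤ _ := h4
    have hne : ¬ (x 0 = 0 ∧ x 1 = 0 ∧ x 2 = 0) := by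
      rintro ⟨e0, e1, e2⟩
      apply hv0
      funext i
      fin_cases i
      · exact norm_eq_zero.1 e0
      · exact norm_eq_zero.1 e1
      · exact norm_eq_zero.1 e2
    have hd := det_nonpos (c - M 0 0) (M 0 1) (M 0 2) (M 1 0) (c - M 1 1) (M 1 2) (M 2 0)
      (M 2 1) (c - M 2 2) (x 0) (x 1) (x 2) (by linarith [hdiag 0]) (by linarith [hdiag 1]) (by linarith [hdiag 2])
      (hnonneg 0 1) (hnonneg 0 2) (hnonneg 1 0) (hnonneg 1 2) (hnonneg 2 0) (hnonneg 2 1)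
      (hxnn 0) (hxnn 1) (hxnn 2) hne
      (by have := hrow 0; linarith) (by have := hrow 1; linarith) (by have := hrow 2; linarith)
    rw [hdetexpr c] at hdet
    nlinarith [hd, hdet]
end

section
/- Let $A$ be a row-stochastic matrix with positive diagonal entries compatible with a strongly connected directed graph, and let $\phi$ be a stochastic vector with strictly positive entries such that $\phi^T A = \phi^T$. Then the spectral radius of $A - \mathbf{1}\phi^T$ is strictly less than $1$. -/
private lemma stmt18_aux (z : ℂ) (c : ℝ) (hre : z.re = c) (habs : ‖z‖ ≤ c) :
    z = (c : ℂ) := by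
  have h1 : Complex.normSq z = z.re ^ 2 + z.im ^ 2 := by rw [Complex.normSq_apply]; ring
  have h2 : Complex.normSq z ≤ c ^ 2 := by
    rw [← Complex.sq_norm]
    have := norm_nonneg z
    nlinarith
  have him : z.im = 0 := by
    rw [hre] at h1
    have h3 : z.im ^ 2 ≤ 0 := by linarith
    have h4 := sq_nonneg z.im
    have : z.im ^ 2 = 0 := le_antisymm h3 h4
    exact pow_eq_zero_iff (by norm_num) |>.1 this
  exact Complex.ext (by simp [hre]) (by simp [him])


/-- Lemma 3 ingredient: for a row-stochastic matrix `A` with positive diagonal whose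
graph is strongly connected, and a positive stochastic vector `φ` with `φᵀA = φᵀ`,
the spectral radius of `A − 𝟏φᵀ` is strictly less than 1. -/
theorem stmt_18 (n : ℕ) (hn : 0 < n) (A : Matrix (Fin n) (Fin n) ℝ)
    (hnonneg : ∀ i j, 0 ≤ A i j)
    (hrow : ∀ i, ∑ j, A i j = 1)
    (hdiag : ∀ i, 0 < A i i)
    (hconn : ∀ i j : Fin n, i ≠ j →
      Relation.TransGen (fun u v : Fin n => 0 < A u v) i j)
    (φ : Fin n → ℝ)
    (hφpos : ∀ i, 0 < φ i) (hφsum : ∑ i, φ i = 1)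
    (hφA : Matrix.vecMul φ A = φ) :
    ∀ μ ∈ spectrum ℂ
      ((A - Matrix.vecMulVec (fun _ => (1 : ℝ)) φ).map Complex.ofReal),
      ‖μ‖ < 1 := by
  intro μ hμ
  set B := (A - Matrix.vecMulVec (fun _ => (1 : ℝ)) φ).map Complex.ofReal with hB
  rw [spectrum.mem_iff, Matrix.isUnit_iff_isUnit_det, isUnit_iff_ne_zero, not_not] at hμ
  obtain ⟨v, hv, hv0⟩ := Matrix.exists_mulVec_eq_zero_iff.2 hμ
  have hBv : ∀ i, ∑ j, ((A i j : ℂ) - (φ j : ℂ)) * v j = μ * v i := by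
    intro i
    have h2 := congrFun hv0 i
    simp [hB, Matrix.mulVec, dotProduct, Matrix.sub_apply, Matrix.map_apply,
      Matrix.algebraMap_matrix_apply, Matrix.vecMulVec_apply,
      sub_mul, Finset.sum_sub_distrib, ite_mul, Finset.sum_ite_eq, sub_eq_zero] at h2
    simpa [Finset.sum_sub_distrib, sub_mul] using h2.symm
  clear_value B
  clear hμ hv0 hB B
  set s : ℂ := ∑ j, (φ j : ℂ) * v j with hs
  have hφ1 : ∑ i, (φ i : ℂ) = 1 := by
    rw [← Complex.ofReal_sum, hφsum, Complex.ofReal_one]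
  have hcol : ∀ j, ∑ i, (φ i : ℂ) * (A i j : ℂ) = (φ j : ℂ) := by
    intro j
    have := congrFun hφA j
    simp only [Matrix.vecMul, dotProduct] at this
    push_cast [← this]
    norm_num
  have hμs : μ * s = 0 := by
    have h1 : μ * s = ∑ i, (φ i : ℂ) * (μ * v i) := by
      rw [hs, Finset.mul_sum]; exact Finset.sum_congr rfl (by intros; ring)
    rw [h1]
    calc ∑ i, (φ i : ℂ) * (μ * v i)
        = ∑ i, (φ i : ℂ) * ∑ j, ((A i j : ℂ) - (φ j : ℂ)) * v j :=
          Finset.sum_congr rfl (fun i _ => by rw [hBv i])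
      _ = ∑ i, ∑ j, ((φ i : ℂ) * (A i j : ℂ) * v j - (φ i : ℂ) * ((φ j : ℂ) * v j)) := by
          refine Finset.sum_congr rfl fun i _ => ?_
          rw [Finset.mul_sum]; exact Finset.sum_congr rfl fun j _ => by ring
      _ = ∑ j, ∑ i, ((φ i : ℂ) * (A i j : ℂ) * v j - (φ i : ℂ) * ((φ j : ℂ) * v j)) :=
          Finset.sum_comm
      _ = ∑ j, ((∑ i, (φ i : ℂ) * (A i j : ℂ)) * v j
            - (∑ i, (φ i : ℂ)) * ((φ j : ℂ) * v j)) := by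
          refine Finset.sum_congr rfl fun j _ => ?_
          rw [Finset.sum_sub_distrib, ← Finset.sum_mul, ← Finset.sum_mul]
      _ = 0 := by simp only [hcol, hφ1, one_mul]; simp [mul_comm]
  rcases eq_or_ne μ 0 with h0 | h0
  · simp [h0]
  -- μ ≠ 0, so s = 0 and v is an eigenvector of A
  have hs0 : s = 0 := by
    rcases mul_eq_zero.1 hμs with h | h
    · exact absurd h h0
    · exact h
  have hAv : ∀ i, ∑ j, (A i j : ℂ) * v j = μ * v i := by
    intro i
    have := hBv i
    rw [show ∑ j, ((A i j : ℂ) - (φ j : ℂ)) * v j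
        = ∑ j, (A i j : ℂ) * v j - s by
      rw [hs, ← Finset.sum_sub_distrib]; exact Finset.sum_congr rfl fun j _ => by ring] at this
    rw [hs0, sub_zero] at this
    exact this
  -- max modulus index
  have hne : (Finset.univ : Finset (Fin n)).Nonempty := by
    have : Nonempty (Fin n) := ⟨⟨0, hn⟩⟩
    exact Finset.univ_nonempty
  obtain ⟨i₀, -, hmax⟩ := Finset.exists_max_image Finset.univ (fun i => ‖v i‖) hne
  simp only [Finset.mem_univ, true_implies] at hmax
  set M : ℝ := ‖v i₀‖ with hM
  have hMpos : 0 < M := by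
    obtain ⟨k, hk⟩ := Function.ne_iff.mp hv
    calc (0 : ℝ) < ‖v k‖ := by
          simpa using (norm_pos_iff.2 (by simpa using hk))
      _ ≤ M := hmax k
  have hvi₀ : v i₀ ≠ 0 := by
    intro h; rw [hM, h] at hMpos; simp at hMpos
  -- Gershgorin at i₀
  have key1 : (μ - (A i₀ i₀ : ℂ)) * v i₀ = ∑ j ∈ Finset.univ.erase i₀, (A i₀ j : ℂ) * v j := by
    have h := hAv i₀
    rw [← Finset.add_sum_erase _ _ (Finset.mem_univ i₀)] at h
    linear_combination -h
  have herase : ∑ j ∈ Finset.univ.erase i₀, A i₀ j = 1 - A i₀ i₀ := by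
    rw [Finset.sum_erase_eq_sub (Finset.mem_univ i₀), hrow i₀]
  have hger : ‖μ - (A i₀ i₀ : ℂ)‖ ≤ 1 - A i₀ i₀ := by
    have h2 : ‖(μ - (A i₀ i₀ : ℂ)) * v i₀‖ ≤ (1 - A i₀ i₀) * M := by
      rw [key1]
      calc ‖∑ j ∈ Finset.univ.erase i₀, (A i₀ j : ℂ) * v j‖
          ≤ ∑ j ∈ Finset.univ.erase i₀, ‖(A i₀ j : ℂ) * v j‖ :=
            norm_sum_le _ _
        _ ≤ ∑ j ∈ Finset.univ.erase i₀, A i₀ j * M := by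
            refine Finset.sum_le_sum fun j _ => ?_
            rw [norm_mul, Complex.norm_real, Real.norm_eq_abs, abs_of_nonneg (hnonneg i₀ j)]
            exact mul_le_mul_of_nonneg_left (hmax j) (hnonneg i₀ j)
        _ = (1 - A i₀ i₀) * M := by rw [← Finset.sum_mul, herase]
    rw [norm_mul, ← hM] at h2
    exact le_of_mul_le_mul_right h2 hMpos
  have hle1 : ‖μ‖ ≤ 1 := by
    calc ‖μ‖ = ‖(μ - (A i₀ i₀ : ℂ)) + (A i₀ i₀ : ℂ)‖ := by ring_nf
      _ ≤ ‖μ - (A i₀ i₀ : ℂ)‖ + ‖(A i₀ i₀ : ℂ)‖ := norm_add_le _ _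
      _ ≤ (1 - A i₀ i₀) + A i₀ i₀ := by
          refine add_le_add hger ?_
          rw [Complex.norm_real, Real.norm_eq_abs, abs_of_pos (hdiag i₀)]
      _ = 1 := by ring
  by_contra hcon
  push_neg at hcon
  have habs1 : ‖μ‖ = 1 := le_antisymm hle1 hcon
  -- μ = 1
  have hnsq : μ.re * μ.re + μ.im * μ.im = 1 := by
    have := Complex.sq_norm μ
    rw [habs1] at this
    rw [← Complex.normSq_apply]
    nlinarith [this]
  have hnsq2 : (μ.re - A i₀ i₀) * (μ.re - A i₀ i₀) + μ.im * μ.im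
      ≤ (1 - A i₀ i₀) * (1 - A i₀ i₀) := by
    have h1 := Complex.sq_norm (μ - (A i₀ i₀ : ℂ))
    have h2 : ‖μ - (A i₀ i₀ : ℂ)‖ ^ 2 ≤ (1 - A i₀ i₀) ^ 2 := by
      have h3 : (0:ℝ) ≤ ‖μ - (A i₀ i₀ : ℂ)‖ := norm_nonneg _
      nlinarith [hger]
    rw [h1] at h2
    simp only [Complex.normSq_apply, Complex.sub_re, Complex.sub_im, Complex.ofReal_re,
      Complex.ofReal_im, sub_zero] at h2
    nlinarith [h2]
  have hapos : 0 < A i₀ i₀ := hdiag i₀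
  have hrege : 1 ≤ μ.re := by nlinarith [hnsq, hnsq2, hapos]
  have him0 : μ.im = 0 := by
    have h1 : μ.im * μ.im ≤ 0 := by nlinarith [hnsq, hrege]
    exact mul_self_eq_zero.1 (le_antisymm h1 (mul_self_nonneg _))
  have hre1 : μ.re = 1 := by nlinarith [hnsq, hrege, him0]
  have hμ1 : μ = 1 := by
    apply Complex.ext <;> simp [hre1, him0]
  -- A v = v; show v constant by strong connectivity
  have hAv1 : ∀ i, ∑ j, (A i j : ℂ) * v j = v i := by
    intro i; rw [hAv i, hμ1, one_mul]
  have hstep : ∀ i, ‖v i‖ = M → ∀ k, 0 < A i k → v k = v i := by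
    intro i hMi k hAik
    have hrebound : ∀ j, ((starRingEnd ℂ) (v i) * v j).re ≤ M * M := by
      intro j
      calc ((starRingEnd ℂ) (v i) * v j).re
          ≤ ‖(starRingEnd ℂ) (v i) * v j‖ := Complex.re_le_norm _
        _ = ‖v i‖ * ‖v j‖ := by
            rw [norm_mul, Complex.norm_conj]
        _ ≤ M * M := by
            rw [hMi]
            exact mul_le_mul_of_nonneg_left (hmax j) hMpos.le
    have hsumre : ∑ j, A i j * ((starRingEnd ℂ) (v i) * v j).re = M * M := by
      have h0 : ((starRingEnd ℂ) (v i) * ∑ j, (A i j : ℂ) * v j).re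
          = ((starRingEnd ℂ) (v i) * v i).re := by rw [hAv1 i]
      have hlhs : ((starRingEnd ℂ) (v i) * ∑ j, (A i j : ℂ) * v j).re
          = ∑ j, A i j * ((starRingEnd ℂ) (v i) * v j).re := by
        rw [Finset.mul_sum, Complex.re_sum]
        refine Finset.sum_congr rfl fun j _ => ?_
        rw [show (starRingEnd ℂ) (v i) * ((A i j : ℂ) * v j)
            = (A i j : ℂ) * ((starRingEnd ℂ) (v i) * v j) by ring]
        exact Complex.re_ofReal_mul _ _
      have hrhs : ((starRingEnd ℂ) (v i) * v i).re = M * M := by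
        rw [mul_comm, Complex.mul_conj]
        have h5 : Complex.normSq (v i) = M * M := by
          have h6 := Complex.sq_norm (v i)
          rw [hMi] at h6
          rw [← h6]; ring
        simp [h5]
      rw [← hlhs, h0, hrhs]
    have hzero : ((starRingEnd ℂ) (v i) * v k).re = M * M := by
      have hdef : ∑ j, A i j * (M * M - ((starRingEnd ℂ) (v i) * v j).re) = 0 := by
        have : ∑ j, A i j * (M * M - ((starRingEnd ℂ) (v i) * v j).re)
            = (∑ j, A i j) * (M * M) - ∑ j, A i j * ((starRingEnd ℂ) (v i) * v j).re := by
          rw [Finset.sum_mul, ← Finset.sum_sub_distrib]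
          exact Finset.sum_congr rfl fun j _ => by ring
        rw [this, hrow i, hsumre]; ring
      have hterm := (Finset.sum_eq_zero_iff_of_nonneg
        (fun j _ => mul_nonneg (hnonneg i j) (sub_nonneg.2 (hrebound j)))).1 hdef
        k (Finset.mem_univ k)
      rcases mul_eq_zero.1 hterm with h | h
      · exact absurd h (ne_of_gt hAik)
      · linarith [sub_eq_zero.1 h]
    have habsk : ‖(starRingEnd ℂ) (v i) * v k‖ ≤ M * M := by
      rw [norm_mul, Complex.norm_conj, hMi]
      exact mul_le_mul_of_nonneg_left (hmax k) hMpos.le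
    have heqc : (starRingEnd ℂ) (v i) * v k = (starRingEnd ℂ) (v i) * v i := by
      have hr : (starRingEnd ℂ) (v i) * v i = ((M * M : ℝ) : ℂ) := by
        rw [mul_comm, Complex.mul_conj]
        have h5 : Complex.normSq (v i) = M * M := by
          have h6 := Complex.sq_norm (v i)
          rw [hMi] at h6
          rw [← h6]; ring
        rw [h5]
      rw [hr]
      exact stmt18_aux _ _ hzero habsk
    have hvine : v i ≠ 0 := by
      intro h
      rw [h] at hMi
      simp at hMi
      exact hMpos.ne' hMi.symm
    exact mul_left_cancel₀ (star_ne_zero.2 hvine) heqc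
  have hreach : ∀ j, Relation.TransGen (fun u w : Fin n => 0 < A u w) i₀ j → v j = v i₀ := by
    intro j htg
    induction htg with
    | single hr => exact hstep i₀ hM.symm _ hr
    | tail _ hr ih => exact (hstep _ (by rw [ih, ← hM]) _ hr).trans ih
  have hconst : ∀ j, v j = v i₀ := by
    intro j
    rcases eq_or_ne j i₀ with hj | hj
    · rw [hj]
    · exact hreach j (hconn i₀ j (fun h => hj h.symm))
  have : s = v i₀ := by
    rw [hs]
    calc ∑ j, (φ j : ℂ) * v j = ∑ j, (φ j : ℂ) * v i₀ :=
          Finset.sum_congr rfl fun j _ => by rw [hconst j]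
      _ = (∑ j, (φ j : ℂ)) * v i₀ := by rw [Finset.sum_mul]
      _ = v i₀ := by rw [hφ1, one_mul]
  rw [hs0] at this
  exact hvi₀ this.symm
end
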